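/- Let S be a finite state set, Q a rate matrix function, M a positive integer, and let w_{kl} ∈ [0,1] for 1 ≤ k,l ≤ M satisfy w_{kl} = w_{lk}. Then for all initial conditions v_1(0),…,v_M(0) ∈ Δ, the system of ODEs d/dt v_k(t) = Q( (1/M) ∑_{l=1}^M w_{kl} v_l(t) ) v_k(t), k = 1,…,M, has a unique global solution on [0,∞), and this solution satisfies v_k(t) ∈ Δ for all t ≥ 0 and all k. -/

import Mathlib

open MeasureTheory Set

/-- The ℓ¹ norm on ℝ^S. -/
noncomputable def l1Norm {S : Type} [Fintype S] (v : S → ℝ) : ℝ := ∑ s, |v s|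

/-- The operator norm on S×S matrices induced by the ℓ¹ norm. -/
noncomputable def matL1Norm {S : Type} [Fintype S] (A : Matrix S S ℝ) : ℝ :=
  sSup { r | ∃ v : S → ℝ, l1Norm v = 1 ∧ r = l1Norm (A.mulVec v) }

/-- The probability simplex Δ in ℝ^S. -/
def probSimplex (S : Type) [Fintype S] : Set (S → ℝ) :=
  {v | (∀ s, 0 ≤ v s) ∧ ∑ s, v s = 1}

/-- A rate matrix function with Lipschitz constant `L`. -/
def IsRateMatrixFun {S : Type} [Fintype S] (Q : (S → ℝ) → Matrix S S ℝ) (L : ℝ) : Prop :=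
  (∀ φ : S → ℝ, ∀ s s' : S, s ≠ s' → 0 ≤ Q φ s s') ∧
  (∀ φ : S → ℝ, ∀ s' : S, ∑ s, Q φ s s' = 0) ∧
  (∀ φ ψ : S → ℝ, matL1Norm (Q φ - Q ψ) ≤ L * l1Norm (fun s => φ s - ψ s))

/-- `v` solves the discretized mean-field ODE system
`d/dt v_k(t) = Q((1/M) ∑_l w_{kl} v_l(t)) v_k(t)` with initial condition `v₀`. -/
def IsDiscreteMFSolution {S : Type} [Fintype S] {M : ℕ}
    (Q : (S → ℝ) → Matrix S S ℝ) (w : Fin M → Fin M → ℝ)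
    (v₀ : Fin M → S → ℝ) (v : ℝ → Fin M → S → ℝ) : Prop :=
  v 0 = v₀ ∧
  ∀ t : ℝ, 0 ≤ t → ∀ k : Fin M,
    HasDerivAt (fun τ => v τ k)
      ((Q (fun s => (1 / (M:ℝ)) * ∑ l, w k l * v t l s)).mulVec (v t k)) t

/-!
Truncating every coordinate to `[0, 1]` turns the right-hand side into a globally Lipschitz,
bounded vector field, so the truncated system has a global solution by Picard–Lindelöf. Along it
each `∑ₛ vₖ(t)ₛ` is conserved because the columns of `Q` sum to zero, and a negative coordinate has
nonnegative derivative because `Q` is nonnegative off the diagonal while the truncated coordinate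
vanishes. Hence the solution stays in `Δ^M`, where the truncation does nothing. Uniqueness holds
because the untruncated field is locally Lipschitz.
-/

open Metric
open scoped NNReal Topology Matrix

attribute [local instance] Matrix.normedAddCommGroup

section ODE

variable {E : Type*} [NormedAddCommGroup E] [NormedSpace ℝ E]

theorem ODE_solution_unique_Ici_of_locallyLipschitz {F : E → E} (hF : LocallyLipschitz F)
    {f g : ℝ → E} (hf : ∀ t, 0 ≤ t → HasDerivAt f (F (f t)) t)
    (hg : ∀ t, 0 ≤ t → HasDerivAt g (F (g t)) t) (h0 : f 0 = g 0) : EqOn f g (Ici 0) := by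
  intro t ht
  have hfc : ContinuousOn f (Icc 0 t) := fun τ hτ => (hf τ hτ.1).continuousAt.continuousWithinAt
  have hgc : ContinuousOn g (Icc 0 t) := fun τ hτ => (hg τ hτ.1).continuousAt.continuousWithinAt
  obtain ⟨K, hK⟩ := (hF.locallyLipschitzOn (s := f '' Icc 0 t ∪ g '' Icc 0 t))
    |>.exists_lipschitzOnWith_of_compact
      ((isCompact_Icc.image_of_continuousOn hfc).union (isCompact_Icc.image_of_continuousOn hgc))
  exact ODE_solution_unique_of_mem_Icc_right (v := fun _ => F) (fun _ _ => hK)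
    hfc (fun τ hτ => (hf τ hτ.1).hasDerivWithinAt)
    (fun τ hτ => Or.inl (mem_image_of_mem f (Ico_subset_Icc_self hτ)))
    hgc (fun τ hτ => (hg τ hτ.1).hasDerivWithinAt)
    (fun τ hτ => Or.inr (mem_image_of_mem g (Ico_subset_Icc_self hτ))) h0 ⟨ht, le_rfl⟩

variable [CompleteSpace E] {F : E → E} {K C : ℝ≥0}

theorem exists_forall_mem_Ioo_hasDerivAt_of_lipschitzWith (hF : LipschitzWith K F)
    (hC : ∀ x, ‖F x‖ ≤ C) (x₀ : E) (T : ℝ≥0) :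
    ∃ f : ℝ → E, f 0 = x₀ ∧ ∀ t ∈ Ioo (-(T : ℝ)) T, HasDerivAt f (F (f t)) t := by
  have hPL : IsPicardLindelof (fun _ => F) (tmin := -(T : ℝ)) (tmax := T) ⟨0, by simp⟩ x₀
      (C * T) 0 C K :=
    .of_time_independent (fun x _ => hC x) hF.lipschitzOnWith (by simp)
  obtain ⟨f, hf0, hf⟩ := hPL.exists_eq_forall_mem_Icc_hasDerivWithinAt₀
  exact ⟨f, hf0, fun t ht => (hf t (Ioo_subset_Icc_self ht)).hasDerivAt (Icc_mem_nhds ht.1 ht.2)⟩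

theorem exists_forall_hasDerivAt_of_lipschitzWith (hF : LipschitzWith K F)
    (hC : ∀ x, ‖F x‖ ≤ C) (x₀ : E) :
    ∃ f : ℝ → E, f 0 = x₀ ∧ ∀ t, HasDerivAt f (F (f t)) t := by
  choose g hg0 hg using
    fun n : ℕ => exists_forall_mem_Ioo_hasDerivAt_of_lipschitzWith hF hC x₀ (n + 1)
  replace hg : ∀ (n : ℕ) (t : ℝ), |t| < n + 1 → HasDerivAt (g n) (F (g n t)) t :=
    fun n t ht => hg n t (by rw [mem_Ioo, ← abs_lt]; exact_mod_cast ht)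
  have hagree : ∀ (n m : ℕ) (t : ℝ), |t| < n + 1 → |t| < m + 1 → g n t = g m t := by
    intro n m t hn hm
    have hT : 0 < min ((n : ℝ) + 1) (m + 1) := lt_min (by positivity) (by positivity)
    refine ODE_solution_unique_of_mem_Ioo (v := fun _ => F) (s := fun _ => univ) (t₀ := 0)
      (fun _ _ => hF.lipschitzOnWith) (by simpa using hT) (fun τ hτ => ⟨hg n τ ?_, trivial⟩)
      (fun τ hτ => ⟨hg m τ ?_, trivial⟩) ((hg0 n).trans (hg0 m).symm)
      (abs_lt.1 (lt_min hn hm))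
    · exact (lt_min_iff.1 (abs_lt.2 hτ)).1
    · exact (lt_min_iff.1 (abs_lt.2 hτ)).2
  have hceil : ∀ t : ℝ, |t| < ⌈|t|⌉₊ + 1 := fun t => (Nat.le_ceil _).trans_lt (lt_add_one _)
  refine ⟨fun t => g ⌈|t|⌉₊ t, by simp [hg0], fun t => ?_⟩
  have hev : (fun τ => g ⌈|τ|⌉₊ τ) =ᶠ[𝓝 t] g ⌈|t|⌉₊ :=
    (continuous_abs.continuousAt.eventually_lt continuousAt_const (hceil t)).mono
      fun τ hτ => hagree _ _ τ (hceil τ) hτ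
  exact (hg _ t (hceil t)).congr_of_eventuallyEq hev

end ODE

theorem nonneg_of_neg_imp_deriv_nonneg {x x' : ℝ → ℝ} (hx : ∀ t, 0 ≤ t → HasDerivAt x (x' t) t)
    (h0 : 0 ≤ x 0) (hneg : ∀ t, 0 ≤ t → x t < 0 → 0 ≤ x' t) {t : ℝ} (ht : 0 ≤ t) :
    0 ≤ x t := by
  -- At a point where `-x` touches the barrier `ε (τ + 1) > 0`, `x` is negative, so `-x' ≤ 0 < ε`.
  have key : ∀ ε > 0, -x t ≤ ε * (t + 1) := fun ε hε =>
    image_le_of_deriv_right_lt_deriv_boundary (f := fun τ => -x τ) (f' := fun τ => -x' τ)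
      (B := fun τ => ε * (τ + 1)) (B' := fun _ => ε)
      (fun τ hτ => (hx τ hτ.1).neg.continuousAt.continuousWithinAt)
      (fun τ hτ => (hx τ hτ.1).neg.hasDerivWithinAt) (by simp; linarith)
      (fun τ => by simpa using ((hasDerivAt_id τ).add_const 1).const_mul ε)
      (fun τ hτ heq => by
        have hxτ : x τ < 0 := by nlinarith [hτ.1]
        linarith [hneg τ hτ.1 hxτ])
      ⟨ht, le_rfl⟩
  by_contra! h
  have := key (-x t / (2 * (t + 1))) (div_pos (by linarith) (by positivity))
  rw [div_mul_eq_mul_div, mul_div_mul_right _ _ (by positivity : t + 1 ≠ 0)] at this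
  linarith

section Matrix

variable {m n S : Type} [Fintype m] [Fintype n] [Fintype S]

theorem Matrix.norm_mulVec_le_card_mul (A : Matrix m n ℝ) (v : n → ℝ) :
    ‖A *ᵥ v‖ ≤ Fintype.card n * ‖A‖ * ‖v‖ := by
  refine (pi_norm_le_iff_of_nonneg (by positivity)).2 fun i => ?_
  calc ‖(A *ᵥ v) i‖ ≤ ∑ j, ‖A i j * v j‖ := norm_sum_le _ _
    _ = ∑ j, ‖A i j‖ * ‖v j‖ := by simp only [norm_mul]
    _ ≤ ∑ _j : n, ‖A‖ * ‖v‖ := Finset.sum_le_sum fun j _ =>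
        mul_le_mul (Matrix.norm_entry_le_entrywise_sup_norm A) (norm_le_pi_norm v j)
          (norm_nonneg _) (norm_nonneg _)
    _ = _ := by simp [mul_assoc]

theorem Matrix.sum_mulVec_eq_zero {A : Matrix m n ℝ} (hA : ∀ j, ∑ i, A i j = 0) (v : n → ℝ) :
    ∑ i, (A *ᵥ v) i = 0 := by
  simp only [Matrix.mulVec, dotProduct]
  rw [Finset.sum_comm]
  simp [← Finset.sum_mul, hA]

theorem Matrix.mulVec_apply_nonneg {A : Matrix S S ℝ} (hA : ∀ i j, i ≠ j → 0 ≤ A i j)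
    {v : S → ℝ} (hv : ∀ j, 0 ≤ v j) {i : S} (hi : v i = 0) : 0 ≤ (A *ᵥ v) i :=
  Finset.sum_nonneg fun j _ => by
    rcases eq_or_ne i j with rfl | hij
    · simp [hi]
    · exact mul_nonneg (hA i j hij) (hv j)

theorem l1Norm_nonneg (v : S → ℝ) : 0 ≤ l1Norm v :=
  Finset.sum_nonneg fun _ _ => abs_nonneg _

theorem abs_apply_le_l1Norm (v : S → ℝ) (s : S) : |v s| ≤ l1Norm v :=
  Finset.single_le_sum (f := fun s => |v s|) (fun _ _ => abs_nonneg _) (Finset.mem_univ s)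

theorem l1Norm_le_card_mul_norm (v : S → ℝ) : l1Norm v ≤ Fintype.card S * ‖v‖ :=
  calc l1Norm v ≤ ∑ _s : S, ‖v‖ := Finset.sum_le_sum fun s _ => norm_le_pi_norm v s
    _ = _ := by simp

theorem bddAbove_l1Norm_mulVec (A : Matrix S S ℝ) :
    BddAbove {r | ∃ v : S → ℝ, l1Norm v = 1 ∧ r = l1Norm (A *ᵥ v)} := by
  refine ⟨∑ s, ∑ s', |A s s'|, ?_⟩
  rintro r ⟨v, hv, rfl⟩
  refine Finset.sum_le_sum fun s _ =>
    (Finset.abs_sum_le_sum_abs _ _).trans (Finset.sum_le_sum fun s' _ => ?_)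
  rw [abs_mul]
  exact mul_le_of_le_one_right (abs_nonneg _) (hv ▸ abs_apply_le_l1Norm v s')

theorem abs_apply_le_matL1Norm (A : Matrix S S ℝ) (s s' : S) : |A s s'| ≤ matL1Norm A := by
  classical
  have hunit : l1Norm (Pi.single s' (1 : ℝ)) = 1 := by
    simp [l1Norm, Pi.single_apply, apply_ite abs]
  calc |A s s'| ≤ l1Norm (A *ᵥ Pi.single s' 1) := by
        simpa [Matrix.mulVec_single_one] using abs_apply_le_l1Norm (A *ᵥ Pi.single s' 1) s
    _ ≤ matL1Norm A := by
        unfold matL1Norm; exact le_csSup (bddAbove_l1Norm_mulVec A) ⟨_, hunit, rfl⟩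

theorem norm_le_matL1Norm (A : Matrix S S ℝ) : ‖A‖ ≤ matL1Norm A := by
  have hnonneg : 0 ≤ matL1Norm A := Real.sSup_nonneg <| by
    rintro _ ⟨v, -, rfl⟩
    exact l1Norm_nonneg _
  exact (Matrix.norm_le_iff hnonneg).2 fun s s' => abs_apply_le_matL1Norm A s s'

end Matrix

theorem IsRateMatrixFun.exists_lipschitzWith {S : Type} [Fintype S]
    {Q : (S → ℝ) → Matrix S S ℝ} {L : ℝ} (hQ : IsRateMatrixFun Q L) : ∃ K, LipschitzWith K Q :=
  ⟨_, LipschitzWith.of_dist_le' (K := max L 0 * Fintype.card S) fun φ ψ =>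
    calc dist (Q φ) (Q ψ) ≤ matL1Norm (Q φ - Q ψ) := by
          rw [dist_eq_norm]; exact norm_le_matL1Norm _
      _ ≤ L * l1Norm (φ - ψ) := hQ.2.2 φ ψ
      _ ≤ max L 0 * (Fintype.card S * ‖φ - ψ‖) :=
          mul_le_mul (le_max_left _ _) (l1Norm_le_card_mul_norm _) (l1Norm_nonneg _)
            (le_max_right _ _)
      _ = _ := by rw [dist_eq_norm]; ring⟩

section MeanField

variable {S : Type} {M : ℕ} {w : Fin M → Fin M → ℝ}

noncomputable def meanField (w : Fin M → Fin M → ℝ) (V : Fin M → S → ℝ) (k : Fin M) : S → ℝ :=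
  fun s => (1 / (M : ℝ)) * ∑ l, w k l * V l s

theorem meanField_sub (V W : Fin M → S → ℝ) (k : Fin M) :
    meanField w V k - meanField w W k = meanField w (V - W) k := by
  ext s
  simp [meanField, mul_sub, Finset.sum_sub_distrib]

variable [Fintype S]

theorem norm_meanField_le (hw : ∀ k l, |w k l| ≤ 1) (V : Fin M → S → ℝ) (k : Fin M) :
    ‖meanField w V k‖ ≤ ‖V‖ := by
  refine (pi_norm_le_iff_of_nonneg (norm_nonneg V)).2 fun s => ?_
  have hterm : ∀ l, |w k l * V l s| ≤ ‖V‖ := fun l => by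
    rw [abs_mul, ← one_mul ‖V‖]
    exact mul_le_mul (hw k l) ((norm_le_pi_norm (V l) s).trans (norm_le_pi_norm V l))
      (abs_nonneg _) zero_le_one
  calc ‖meanField w V k s‖ = 1 / M * |∑ l, w k l * V l s| := by
        simp [meanField]
    _ ≤ 1 / M * (M * ‖V‖) := by
        gcongr
        simpa using (Finset.abs_sum_le_sum_abs _ Finset.univ).trans
          (Finset.sum_le_sum fun l _ => hterm l)
    _ ≤ ‖V‖ := by
        rcases Nat.eq_zero_or_pos M with rfl | hM
        · simp
        · rw [← mul_assoc, one_div_mul_cancel (Nat.cast_pos.2 hM).ne', one_mul]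

end MeanField

section Field

variable {S : Type} [Fintype S] {M : ℕ} {Q : (S → ℝ) → Matrix S S ℝ} {w : Fin M → Fin M → ℝ}

noncomputable def mfVectorField (Q : (S → ℝ) → Matrix S S ℝ) (w : Fin M → Fin M → ℝ)
    (V : Fin M → S → ℝ) : Fin M → S → ℝ :=
  fun k => Q (meanField w V k) *ᵥ V k

theorem exists_lipschitzOnWith_mfVectorField {K : ℝ≥0} (hQ : LipschitzWith K Q)
    (hw : ∀ k l, |w k l| ≤ 1) (R : ℝ) :
    ∃ K', LipschitzOnWith K' (mfVectorField Q w) (closedBall 0 R) := by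
  set c : ℝ := (Fintype.card S : ℝ)
  refine ⟨_, LipschitzOnWith.of_dist_le' (K := c * (2 * K * R + ‖Q 0‖)) fun V hV W hW => ?_⟩
  rw [mem_closedBall_zero_iff] at hV hW
  have hR : 0 ≤ R := (norm_nonneg _).trans hV
  rw [dist_eq_norm, dist_eq_norm]
  refine (pi_norm_le_iff_of_nonneg (by positivity)).2 fun k => ?_
  set A := Q (meanField w V k)
  set B := Q (meanField w W k)
  have hAB : ‖A - B‖ ≤ K * ‖V - W‖ := by
    rw [← dist_eq_norm]
    refine (hQ.dist_le_mul _ _).trans ?_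
    rw [dist_eq_norm, meanField_sub]
    gcongr
    exact norm_meanField_le hw _ k
  have hB : ‖B‖ ≤ ‖Q 0‖ + K * R := by
    refine (norm_le_insert' B (Q 0)).trans ?_
    rw [← dist_eq_norm]
    gcongr
    refine (hQ.dist_le_mul _ _).trans ?_
    rw [dist_zero_right]
    gcongr
    exact (norm_meanField_le hw W k).trans hW
  calc ‖mfVectorField Q w V k - mfVectorField Q w W k‖ = ‖(A - B) *ᵥ V k + B *ᵥ (V k - W k)‖ := by
        simp only [mfVectorField, Matrix.sub_mulVec, Matrix.mulVec_sub, A, B]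
        abel_nf
    _ ≤ c * ‖A - B‖ * ‖V k‖ + c * ‖B‖ * ‖V k - W k‖ :=
        (norm_add_le _ _).trans
          (add_le_add (Matrix.norm_mulVec_le_card_mul _ _) (Matrix.norm_mulVec_le_card_mul _ _))
    _ ≤ c * (K * ‖V - W‖) * R + c * (‖Q 0‖ + K * R) * ‖V - W‖ := by
        gcongr
        · exact (norm_le_pi_norm V k).trans hV
        · exact norm_le_pi_norm (V - W) k
    _ = c * (2 * K * R + ‖Q 0‖) * ‖V - W‖ := by ring

theorem locallyLipschitz_mfVectorField {K : ℝ≥0} (hQ : LipschitzWith K Q) (hw : ∀ k l, |w k l| ≤ 1) :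
    LocallyLipschitz (mfVectorField Q w) := fun V => by
  obtain ⟨K', hK'⟩ := exists_lipschitzOnWith_mfVectorField hQ hw (‖V‖ + 1)
  exact ⟨K', _, closedBall_mem_nhds_of_mem (by simp), hK'⟩

end Field

section Truncation

variable {ι S : Type}

def truncate (V : ι → S → ℝ) : ι → S → ℝ := fun k s => max 0 (min 1 (V k s))

theorem truncate_nonneg (V : ι → S → ℝ) (k : ι) (s : S) : 0 ≤ truncate V k s :=
  le_max_left _ _

theorem truncate_apply_of_neg {V : ι → S → ℝ} {k : ι} {s : S} (h : V k s < 0) :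
    truncate V k s = 0 :=
  max_eq_left ((min_le_right _ _).trans h.le)

variable [Fintype S]

theorem apply_le_one_of_mem_probSimplex {v : S → ℝ} (hv : v ∈ probSimplex S) (s : S) : v s ≤ 1 :=
  hv.2 ▸ Finset.single_le_sum (fun s _ => hv.1 s) (Finset.mem_univ s)

theorem truncate_eq_self {V : ι → S → ℝ} (hV : ∀ k, V k ∈ probSimplex S) : truncate V = V := by
  ext k s
  exact max_eq_right (le_min zero_le_one ((hV k).1 s)) |>.trans
    (min_eq_right (apply_le_one_of_mem_probSimplex (hV k) s))

variable [Fintype ι]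

theorem lipschitzWith_truncate : LipschitzWith 1 (truncate : (ι → S → ℝ) → ι → S → ℝ) :=
  LipschitzWith.of_dist_le_mul fun V W => by
    rw [NNReal.coe_one, one_mul, dist_pi_le_iff dist_nonneg]
    intro k
    rw [dist_pi_le_iff dist_nonneg]
    intro s
    simp only [truncate, Real.dist_eq]
    calc |max 0 (min 1 (V k s)) - max 0 (min 1 (W k s))| ≤ |min 1 (V k s) - min 1 (W k s)| := by
          simpa using abs_max_sub_max_le_max 0 (min 1 (V k s)) 0 (min 1 (W k s))
      _ ≤ |V k s - W k s| := by
          simpa using abs_min_sub_min_le_max 1 (V k s) 1 (W k s)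
      _ ≤ dist V W := (dist_le_pi_dist (V k) (W k) s).trans (dist_le_pi_dist V W k)

theorem norm_truncate_le (V : ι → S → ℝ) : ‖truncate V‖ ≤ 1 :=
  (pi_norm_le_iff_of_nonneg zero_le_one).2 fun k =>
    (pi_norm_le_iff_of_nonneg zero_le_one).2 fun s =>
      abs_le.2 ⟨neg_one_lt_zero.le.trans (truncate_nonneg V k s),
        max_le zero_le_one (min_le_left _ _)⟩

end Truncation

section TruncatedSystem

variable {S : Type} [Fintype S] {M : ℕ} {Q : (S → ℝ) → Matrix S S ℝ} {w : Fin M → Fin M → ℝ}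

theorem exists_truncated_solution {K : ℝ≥0} (hQ : LipschitzWith K Q) (hw : ∀ k l, |w k l| ≤ 1)
    (v₀ : Fin M → S → ℝ) :
    ∃ f : ℝ → Fin M → S → ℝ, f 0 = v₀ ∧ ∀ t, HasDerivAt f (mfVectorField Q w (truncate (f t))) t := by
  obtain ⟨K', hK'⟩ := exists_lipschitzOnWith_mfVectorField hQ hw 1
  have hmaps : MapsTo truncate (univ : Set (Fin M → S → ℝ)) (closedBall 0 1) :=
    fun V _ => mem_closedBall_zero_iff.2 (norm_truncate_le V)
  have hlip : LipschitzWith K' (mfVectorField Q w ∘ truncate) :=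
    mul_one K' ▸ lipschitzOnWith_univ.1 (hK'.comp lipschitzWith_truncate.lipschitzOnWith hmaps)
  have hbdd : ∀ V : Fin M → S → ℝ, ‖mfVectorField Q w (truncate V)‖ ≤ K' := fun V => by
    have hzero : mfVectorField Q w (0 : Fin M → S → ℝ) = 0 := by ext; simp [mfVectorField]
    have := hK'.dist_le_mul _ (hmaps (mem_univ V)) 0 (mem_closedBall_self zero_le_one)
    rw [hzero, dist_zero_right, dist_zero_right] at this
    exact this.trans (mul_le_of_le_one_right K'.2 (norm_truncate_le V))
  exact exists_forall_hasDerivAt_of_lipschitzWith hlip hbdd v₀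

theorem truncated_solution_mem_probSimplex {L : ℝ} (hQ : IsRateMatrixFun Q L)
    {f : ℝ → Fin M → S → ℝ} (hf : ∀ t, HasDerivAt f (mfVectorField Q w (truncate (f t))) t)
    (h0 : ∀ k, f 0 k ∈ probSimplex S) {t : ℝ} (ht : 0 ≤ t) (k : Fin M) :
    f t k ∈ probSimplex S := by
  have hcoord : ∀ τ s, HasDerivAt (fun τ => f τ k s) (mfVectorField Q w (truncate (f τ)) k s) τ :=
    fun τ s => hasDerivAt_pi.1 (hasDerivAt_pi.1 (hf τ) k) s
  have hsum : ∀ τ, HasDerivAt (fun τ => ∑ s, f τ k s) 0 τ := fun τ => by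
    simpa [mfVectorField, Matrix.sum_mulVec_eq_zero (hQ.2.1 _)] using
      HasDerivAt.fun_sum (u := Finset.univ) fun s _ => hcoord τ s
  refine ⟨fun s => nonneg_of_neg_imp_deriv_nonneg (fun τ _ => hcoord τ s) ((h0 k).1 s)
    (fun τ _ hτ => ?_) ht, ?_⟩
  · exact Matrix.mulVec_apply_nonneg (hQ.1 _) (truncate_nonneg _ k) (truncate_apply_of_neg hτ)
  · rw [← (h0 k).2]
    exact is_const_of_deriv_eq_zero (fun τ => (hsum τ).differentiableAt)
      (fun τ => (hsum τ).deriv) t 0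

end TruncatedSystem

theorem stmt3_general {S : Type} [Fintype S] (M : ℕ) (L_Q : ℝ)
    (Q : (S → ℝ) → Matrix S S ℝ) (hQ : IsRateMatrixFun Q L_Q)
    (w : Fin M → Fin M → ℝ)
    (hw01 : ∀ k l, w k l ∈ Icc (0:ℝ) 1)
    (v₀ : Fin M → S → ℝ) (hv₀ : ∀ k, v₀ k ∈ probSimplex S) :
    (∃ v : ℝ → Fin M → S → ℝ, IsDiscreteMFSolution Q w v₀ v ∧
      ∀ t : ℝ, 0 ≤ t → ∀ k, v t k ∈ probSimplex S) ∧
    (∀ v v' : ℝ → Fin M → S → ℝ, IsDiscreteMFSolution Q w v₀ v →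
      IsDiscreteMFSolution Q w v₀ v' → ∀ t : ℝ, 0 ≤ t → v t = v' t) := by
  have hw : ∀ k l, |w k l| ≤ 1 := fun k l =>
    abs_le.2 ⟨by linarith [(hw01 k l).1], (hw01 k l).2⟩
  obtain ⟨K, hQlip⟩ := hQ.exists_lipschitzWith
  have hfield : ∀ v, IsDiscreteMFSolution Q w v₀ v →
      ∀ t, 0 ≤ t → HasDerivAt v (mfVectorField Q w (v t)) t :=
    fun v hv t ht => hasDerivAt_pi.2 (hv.2 t ht)
  refine ⟨?_, fun v v' hv hv' t ht => ODE_solution_unique_Ici_of_locallyLipschitz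
    (locallyLipschitz_mfVectorField hQlip hw) (hfield v hv) (hfield v' hv') (hv.1.trans hv'.1.symm) ht⟩
  obtain ⟨f, hf0, hf⟩ := exists_truncated_solution hQlip hw v₀
  have hΔ : ∀ t, 0 ≤ t → ∀ k, f t k ∈ probSimplex S :=
    fun t ht => truncated_solution_mem_probSimplex hQ hf (hf0 ▸ hv₀) ht
  refine ⟨f, ⟨hf0, fun t ht k => ?_⟩, hΔ⟩
  have hk := hasDerivAt_pi.1 (hf t) k
  rwa [truncate_eq_self (hΔ t ht)] at hk

/-- the discretized mean-field ODE system has a unique global solution on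
`[0,∞)` for any initial condition in Δ, and the solution stays in Δ. -/
theorem stmt3 {S : Type} [Fintype S] (M : ℕ) (hM : 0 < M) (L_Q : ℝ)
    (Q : (S → ℝ) → Matrix S S ℝ) (hQ : IsRateMatrixFun Q L_Q)
    (w : Fin M → Fin M → ℝ)
    (hw01 : ∀ k l, w k l ∈ Icc (0:ℝ) 1)
    (hwsymm : ∀ k l, w k l = w l k)
    (v₀ : Fin M → S → ℝ) (hv₀ : ∀ k, v₀ k ∈ probSimplex S) :
    (∃ v : ℝ → Fin M → S → ℝ, IsDiscreteMFSolution Q w v₀ v ∧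
      ∀ t : ℝ, 0 ≤ t → ∀ k, v t k ∈ probSimplex S) ∧
    (∀ v v' : ℝ → Fin M → S → ℝ, IsDiscreteMFSolution Q w v₀ v →
      IsDiscreteMFSolution Q w v₀ v' → ∀ t : ℝ, 0 ≤ t → v t = v' t) :=
  stmt3_general M L_Q Q hQ w hw01 v₀ hv₀
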